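/- arXiv:0901.2300 — 5 statements merged into one kernel-verified Lean document; each statement's English description precedes it below -/
import Mathlib

section
/- Let L be a finite-dimensional simple Lie algebra over a field, and suppose L = L_a ⊕ L_b is a decomposition into two nonzero subspaces such that for each pair (i,j) ∈ {a,b}² there is k ∈ {a,b} with [L_i, L_j] ⊆ L_k. Then, after possibly relabeling, the decomposition satisfies [L_a,L_a] ⊆ L_a, [L_a,L_b] ⊆ L_b, [L_b,L_b] ⊆ L_a; i.e., every grading of a simple Lie algebra into two subspaces is a ℤ₂-grading. -/
section Aux

variable {K L : Type*} [Field K] [LieRing L] [LieAlgebra K L] [LieAlgebra.IsSimple K L]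

/-- A nonzero subspace closed under bracketing with all of `L` is everything. -/
lemma aux_ideal_eq_top (I : Submodule K L) (hI : I ≠ ⊥)
    (h : ∀ (x : L), ∀ y ∈ I, ⁅x, y⁆ ∈ I) : I = ⊤ := by
  let J : LieIdeal K L := ⟨I, fun {x m} hm => h x m hm⟩
  have hmem : ∀ x : L, x ∈ I ↔ x ∈ J := fun x => Iff.rfl
  rcases eq_bot_or_eq_top J with h1 | h1
  · exfalso; apply hI
    rw [Submodule.eq_bot_iff]
    intro x hx
    have : x ∈ J := (hmem x).mp hx
    rw [h1] at this
    simpa using this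
  · rw [Submodule.eq_top_iff']
    intro x
    have : x ∈ J := by rw [h1]; trivial
    exact (hmem x).mpr this

/-- Key lemma: in the configuration `[A,A] ⊆ B`, `[A,B] ⊆ A`, `[B,B] ⊆ A`,
the subspace `B` must bracket to zero with itself. -/
lemma aux_bb_zero (A B : Submodule K L) (hA : A ≠ ⊥) (hc : IsCompl A B)
    (hAA : ∀ x ∈ A, ∀ y ∈ A, ⁅x, y⁆ ∈ B)
    (hAB : ∀ x ∈ A, ∀ y ∈ B, ⁅x, y⁆ ∈ A)
    (hBB : ∀ x ∈ B, ∀ y ∈ B, ⁅x, y⁆ ∈ A) :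
    ∀ x ∈ B, ∀ y ∈ B, ⁅x, y⁆ = 0 := by
  have hBA : ∀ x ∈ B, ∀ y ∈ A, ⁅x, y⁆ ∈ A := by
    intro x hx y hy
    rw [← lie_skew]
    exact neg_mem (hAB y hy x hx)
  set S : Set L := {z | ∃ x ∈ A, ∃ y ∈ A, ⁅x, y⁆ = z} with hS
  have hSmem : ∀ x ∈ A, ∀ y ∈ A, ⁅x, y⁆ ∈ Submodule.span K S := by
    intro x hx y hy
    exact Submodule.subset_span ⟨x, hx, y, hy, rfl⟩
  have hSB : Submodule.span K S ≤ B := by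
    rw [Submodule.span_le]
    rintro z ⟨x, hx, y, hy, rfl⟩
    exact hAA x hx y hy
  set I := A ⊔ Submodule.span K S with hIdef
  have hAI : A ≤ I := le_sup_left
  have hSI : Submodule.span K S ≤ I := le_sup_right
  -- fact1 : bracketing anything with an element of A stays in I
  have fact1 : ∀ (z : L), ∀ w ∈ A, ⁅z, w⁆ ∈ I := by
    intro z w hw
    have hz : z ∈ A ⊔ B := by rw [hc.sup_eq_top]; trivial
    obtain ⟨za, hza, zb, hzb, rfl⟩ := Submodule.mem_sup.mp hz
    rw [add_lie]
    exact add_mem (hSI (hSmem za hza w hw)) (hAI (hBA zb hzb w hw))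
  -- fact2 : bracketing anything with an element of span S stays in I
  have fact2 : ∀ (z : L), ∀ w ∈ Submodule.span K S, ⁅z, w⁆ ∈ I := by
    intro z w hw
    induction hw using Submodule.span_induction with
    | mem w hw =>
      obtain ⟨x, hx, y, hy, rfl⟩ := hw
      have hz : z ∈ A ⊔ B := by rw [hc.sup_eq_top]; trivial
      obtain ⟨za, hza, zb, hzb, rfl⟩ := Submodule.mem_sup.mp hz
      rw [add_lie, leibniz_lie za, leibniz_lie zb]
      refine add_mem (add_mem ?_ ?_) (add_mem ?_ ?_)
      · exact hAI (hBA _ (hAA za hza x hx) y hy)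
      · exact hAI (hAB x hx _ (hAA za hza y hy))
      · exact hSI (hSmem _ (hBA zb hzb x hx) y hy)
      · exact hSI (hSmem x hx _ (hBA zb hzb y hy))
    | zero => rw [lie_zero]; exact zero_mem I
    | add u v hu hv ihu ihv => rw [lie_add]; exact add_mem ihu ihv
    | smul a u hu ihu => rw [lie_smul]; exact Submodule.smul_mem I a ihu
  have hItop : I = ⊤ := by
    refine aux_ideal_eq_top I ?_ ?_
    · intro h0
      exact hA (le_bot_iff.mp (h0 ▸ hAI))
    · intro z w hw
      obtain ⟨u, hu, v, hv, rfl⟩ := Submodule.mem_sup.mp hw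
      rw [lie_add]
      exact add_mem (fact1 z u hu) (fact2 z v hv)
  -- B is spanned by brackets of elements of A
  have hBspan : B ≤ Submodule.span K S := by
    intro b hb
    have : b ∈ I := by rw [hItop]; trivial
    obtain ⟨u, hu, v, hv, huv⟩ := Submodule.mem_sup.mp this
    have hu' : u ∈ B := by
      have : u = b - v := by rw [← huv]; abel
      rw [this]
      exact sub_mem hb (hSB hv)
    have : u = 0 := by
      have := hc.disjoint.le_bot (Submodule.mem_inf.mpr ⟨hu, hu'⟩ :
        u ∈ A ⊓ B)
      simpa using this
    rw [this, zero_add] at huv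
    rw [← huv]; exact hv
  -- claim1 : ⁅⁅x,y⁆, v⁆ ∈ B for x y ∈ A, v ∈ span S
  have claim1 : ∀ x ∈ A, ∀ y ∈ A, ∀ v ∈ Submodule.span K S, ⁅(⁅x, y⁆ : L), v⁆ ∈ B := by
    intro x hx y hy v hv
    induction hv using Submodule.span_induction with
    | mem w hw =>
      obtain ⟨x', hx', y', hy', rfl⟩ := hw
      rw [leibniz_lie]
      refine add_mem ?_ ?_
      · exact hAA _ (hBA _ (hAA x hx y hy) x' hx') y' hy'
      · exact hAA x' hx' _ (hBA _ (hAA x hx y hy) y' hy')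
    | zero => rw [lie_zero]; exact zero_mem B
    | add u v hu hv ihu ihv => rw [lie_add]; exact add_mem ihu ihv
    | smul a u hu ihu => rw [lie_smul]; exact Submodule.smul_mem B a ihu
  have claim2 : ∀ u ∈ Submodule.span K S, ∀ v ∈ Submodule.span K S, ⁅u, v⁆ ∈ B := by
    intro u hu
    induction hu using Submodule.span_induction with
    | mem w hw =>
      obtain ⟨x, hx, y, hy, rfl⟩ := hw
      intro v hv
      exact claim1 x hx y hy v hv
    | zero => intro v hv; rw [zero_lie]; exact zero_mem B
    | add u u' hu hu' ihu ihu' =>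
      intro v hv
      rw [add_lie]; exact add_mem (ihu v hv) (ihu' v hv)
    | smul a u hu ihu =>
      intro v hv
      rw [smul_lie]; exact Submodule.smul_mem B a (ihu v hv)
  intro x hx y hy
  have h1 : ⁅x, y⁆ ∈ B := claim2 x (hBspan hx) y (hBspan hy)
  have h2 : ⁅x, y⁆ ∈ A := hBB x hx y hy
  have := hc.disjoint.le_bot (Submodule.mem_inf.mpr ⟨h2, h1⟩ : ⁅x, y⁆ ∈ A ⊓ B)
  simpa using this

end Aux

/-- Every grading of a finite-dimensional simple Lie algebra into two nonzero
subspaces is (after possibly relabeling) a `ℤ₂`-grading. -/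
theorem stmt_0 (K L : Type*) [Field K] [LieRing L] [LieAlgebra K L]
    [FiniteDimensional K L] [LieAlgebra.IsSimple K L]
    (A B : Submodule K L) (hA : A ≠ ⊥) (hB : B ≠ ⊥) (hcompl : IsCompl A B)
    (hAA : (∀ x ∈ A, ∀ y ∈ A, ⁅x, y⁆ ∈ A) ∨ (∀ x ∈ A, ∀ y ∈ A, ⁅x, y⁆ ∈ B))
    (hAB : (∀ x ∈ A, ∀ y ∈ B, ⁅x, y⁆ ∈ A) ∨ (∀ x ∈ A, ∀ y ∈ B, ⁅x, y⁆ ∈ B))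
    (hBB : (∀ x ∈ B, ∀ y ∈ B, ⁅x, y⁆ ∈ A) ∨ (∀ x ∈ B, ∀ y ∈ B, ⁅x, y⁆ ∈ B)) :
    ((∀ x ∈ A, ∀ y ∈ A, ⁅x, y⁆ ∈ A) ∧ (∀ x ∈ A, ∀ y ∈ B, ⁅x, y⁆ ∈ B) ∧
      (∀ x ∈ B, ∀ y ∈ B, ⁅x, y⁆ ∈ A)) ∨
    ((∀ x ∈ B, ∀ y ∈ B, ⁅x, y⁆ ∈ B) ∧ (∀ x ∈ B, ∀ y ∈ A, ⁅x, y⁆ ∈ A) ∧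
      (∀ x ∈ A, ∀ y ∈ A, ⁅x, y⁆ ∈ B)) := by
  -- helper: if a nonzero complemented subspace is an ideal, its complement is ⊥
  have decomp : ∀ z : L, ∃ u ∈ A, ∃ v ∈ B, u + v = z := by
    intro z
    have hz : z ∈ A ⊔ B := by rw [hcompl.sup_eq_top]; trivial
    obtain ⟨u, hu, v, hv, huv⟩ := Submodule.mem_sup.mp hz
    exact ⟨u, hu, v, hv, huv⟩
  have skew : ∀ (C : Submodule K L), (∀ x ∈ A, ∀ y ∈ B, ⁅x, y⁆ ∈ C) →
      (∀ x ∈ B, ∀ y ∈ A, ⁅x, y⁆ ∈ C) := by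
    intro C h x hx y hy
    rw [← lie_skew]
    exact neg_mem (h y hy x hx)
  have skew' : ∀ (C : Submodule K L), (∀ x ∈ B, ∀ y ∈ A, ⁅x, y⁆ ∈ C) →
      (∀ x ∈ A, ∀ y ∈ B, ⁅x, y⁆ ∈ C) := by
    intro C h x hx y hy
    rw [← lie_skew]
    exact neg_mem (h y hy x hx)
  have isIdeal : ∀ (C D : Submodule K L), IsCompl C D → C ≠ ⊥ → D ≠ ⊥ →
      (∀ x ∈ C, ∀ y ∈ C, ⁅x, y⁆ ∈ C) → (∀ x ∈ D, ∀ y ∈ C, ⁅x, y⁆ ∈ C) → False := by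
    intro C D hc hC hD h1 h2
    have hCtop : C = ⊤ := by
      refine aux_ideal_eq_top C hC ?_
      intro z y hy
      have hz : z ∈ C ⊔ D := by rw [hc.sup_eq_top]; trivial
      obtain ⟨u, hu, v, hv, rfl⟩ := Submodule.mem_sup.mp hz
      rw [add_lie]
      exact add_mem (h1 u hu y hy) (h2 v hv y hy)
    have hd := hc.disjoint
    rw [hCtop] at hd
    exact hD (disjoint_top.mp hd.symm)
  rcases hAA with hAA | hAA
  · -- [A,A] ⊆ A
    rcases hAB with hAB | hAB
    · -- [A,B] ⊆ A : A is an ideal, contradiction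
      exact absurd (isIdeal A B hcompl hA hB hAA (skew A hAB)) (by simp)
    · -- [A,B] ⊆ B
      rcases hBB with hBB | hBB
      · exact Or.inl ⟨hAA, hAB, hBB⟩
      · -- [B,B] ⊆ B : B is an ideal, contradiction
        exact absurd (isIdeal B A hcompl.symm hB hA hBB hAB) (by simp)
  · -- [A,A] ⊆ B
    rcases hAB with hAB | hAB
    · -- [A,B] ⊆ A
      rcases hBB with hBB | hBB
      · -- hard case: [B,B] = 0
        have h0 := aux_bb_zero A B hA hcompl hAA hAB hBB
        refine Or.inr ⟨?_, skew A hAB, hAA⟩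
        intro x hx y hy
        rw [h0 x hx y hy]
        exact zero_mem B
      · exact Or.inr ⟨hBB, skew A hAB, hAA⟩
    · -- [A,B] ⊆ B
      rcases hBB with hBB | hBB
      · -- mirrored hard case: [A,A] = 0
        have h0 := aux_bb_zero B A hB hcompl.symm hBB (skew B hAB) hAA
        refine Or.inl ⟨?_, hAB, hBB⟩
        intro x hx y hy
        rw [h0 x hx y hy]
        exact zero_mem A
      · -- [B,B] ⊆ B : B is an ideal, contradiction
        exact absurd (isIdeal B A hcompl.symm hB hA hBB hAB) (by simp)
end

section
/- Let L be a finite-dimensional simple Lie algebra with a decomposition L = L_a ⊕ L_b into subspaces satisfying [L_a,L_a] ⊆ L_b, [L_a,L_b] ⊆ L_b, and [L_b,L_b] ⊆ L_a. Then [L_a,L_a] = 0 (so the grading is in fact a ℤ₂-grading with L_b in degree 0 and L_a in degree 1). -/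
/-!
Put `C = [A,A] ⊆ B`. For `b ∈ B` and `x, y ∈ A`, the bracket `[b,[x,y]]` lies in `[B,B] ⊆ A`,
and by the Jacobi identity also in `[[B,A],A] + [A,[B,A]] ⊆ B`; hence `[B,C] = 0`.
Since `ad a` preserves `B` for `a ∈ A`, it preserves the Lie subalgebra generated by `B`, which
is therefore an ideal. By simplicity it is `0`, and then `C ⊆ B = 0`, or it is `L`, and then `C`
centralizes `L`, so `C = 0` as the centre of a simple Lie algebra is trivial.
-/

namespace LieSubalgebra

variable {R L : Type*} [CommRing R] [LieRing L] [LieAlgebra R L]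

theorem mem_normalizer_lieSpan {s : Set L} {x : L} (h : ∀ y ∈ s, ⁅x, y⁆ ∈ lieSpan R L s) :
    x ∈ (lieSpan R L s).normalizer := by
  rw [mem_normalizer_iff]
  intro y hy
  induction hy using lieSpan_induction with
  | mem y hy => exact h y hy
  | zero => simp
  | add u v _ _ hu hv => rw [lie_add]; exact add_mem hu hv
  | smul t u _ hu => rw [lie_smul]; exact LieSubalgebra.smul_mem _ t hu
  | lie u v hu hv hxu hxv =>
    rw [leibniz_lie]
    exact add_mem (lie_mem _ hxu hv) (lie_mem _ hu hxv)

theorem normalizer_lieSpan_eq_top {A B : Submodule R L} (hAB_top : A ⊔ B = ⊤)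
    (hAB : ∀ x ∈ A, ∀ y ∈ B, ⁅x, y⁆ ∈ B) : (lieSpan R L (B : Set L)).normalizer = ⊤ := by
  rw [← toSubmodule_inj, top_toSubmodule, eq_top_iff, ← hAB_top, sup_le_iff]
  constructor
  · exact fun x hx ↦ mem_normalizer_lieSpan fun y hy ↦ subset_lieSpan (hAB x hx y hy)
  · exact fun x hx ↦ le_normalizer _ (subset_lieSpan hx)

theorem eq_bot_or_eq_top_of_normalizer_eq_top [LieAlgebra.IsSimple R L] {H : LieSubalgebra R L}
    (hH : H.normalizer = ⊤) : H = ⊥ ∨ H = ⊤ := by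
  obtain ⟨I, rfl⟩ := (exists_lieIdeal_coe_eq_iff R H).mpr fun x y hy ↦
    ideal_in_normalizer (hH ▸ mem_top x) hy
  rcases LieAlgebra.IsSimple.eq_bot_or_eq_top I with rfl | rfl
  · exact Or.inl rfl
  · exact Or.inr LieIdeal.top_toLieSubalgebra

end LieSubalgebra

theorem LieAlgebra.mem_center_of_lieSpan_eq_top {R L : Type*} [CommRing R] [LieRing L]
    [LieAlgebra R L] {s : Set L} (hs : LieSubalgebra.lieSpan R L s = ⊤) {x : L}
    (h : ∀ y ∈ s, ⁅x, y⁆ = 0) : x ∈ center R L := by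
  rw [← LieDerivation.ad_ker_eq_center, LieHom.mem_ker]
  exact LieDerivation.ext_of_lieSpan_eq_top s hs fun y hy ↦ by simp [h y hy]

theorem lie_lie_eq_zero_of_grading {R L : Type*} [CommRing R] [LieRing L] [LieAlgebra R L]
    {A B : Submodule R L} (hdisj : Disjoint A B)
    (hAA : ∀ x ∈ A, ∀ y ∈ A, ⁅x, y⁆ ∈ B)
    (hAB : ∀ x ∈ A, ∀ y ∈ B, ⁅x, y⁆ ∈ B)
    (hBB : ∀ x ∈ B, ∀ y ∈ B, ⁅x, y⁆ ∈ A)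
    {b : L} (hb : b ∈ B) {x : L} (hx : x ∈ A) {y : L} (hy : y ∈ A) : ⁅b, ⁅x, y⁆⁆ = 0 := by
  have hBA : ∀ u ∈ B, ∀ v ∈ A, ⁅u, v⁆ ∈ B := fun u hu v hv ↦ by
    rw [← lie_skew]; exact neg_mem (hAB v hv u hu)
  have h_memA : ⁅b, ⁅x, y⁆⁆ ∈ A := hBB b hb _ (hAA x hx y hy)
  have h_memB : ⁅b, ⁅x, y⁆⁆ ∈ B := by
    rw [leibniz_lie]
    exact add_mem (hBA _ (hBA b hb x hx) y hy) (hAB x hx _ (hBA b hb y hy))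
  exact (Submodule.disjoint_def.mp hdisj) _ h_memA h_memB

theorem stmt_2_general (K L : Type*) [Field K] [LieRing L] [LieAlgebra K L]
    [LieAlgebra.IsSimple K L]
    (A B : Submodule K L) (hcompl : IsCompl A B)
    (hAA : ∀ x ∈ A, ∀ y ∈ A, ⁅x, y⁆ ∈ B)
    (hAB : ∀ x ∈ A, ∀ y ∈ B, ⁅x, y⁆ ∈ B)
    (hBB : ∀ x ∈ B, ∀ y ∈ B, ⁅x, y⁆ ∈ A) :
    ∀ x ∈ A, ∀ y ∈ A, ⁅x, y⁆ = 0 := by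
  intro x hx y hy
  rcases LieSubalgebra.eq_bot_or_eq_top_of_normalizer_eq_top
    (LieSubalgebra.normalizer_lieSpan_eq_top hcompl.sup_eq_top hAB) with hbot | htop
  · have hB : B = ⊥ := by
      rw [eq_bot_iff]
      intro z hz
      simpa [hbot] using LieSubalgebra.subset_lieSpan (R := K) hz
    simpa [hB] using hAA x hx y hy
  · have hcenter : ⁅x, y⁆ ∈ LieAlgebra.center K L :=
      LieAlgebra.mem_center_of_lieSpan_eq_top htop fun b hb ↦ by
        rw [← lie_skew, lie_lie_eq_zero_of_grading hcompl.disjoint hAA hAB hBB hb hx hy, neg_zero]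
    simpa using hcenter

/-- If a finite-dimensional simple Lie algebra over an algebraically closed field
decomposes as `L = A ⊕ B` with `[A,A] ⊆ B`, `[A,B] ⊆ B`, `[B,B] ⊆ A`, then in fact
`[A,A] = 0` (so the grading is a `ℤ₂`-grading with `B` in degree 0 and `A` in degree 1). -/
theorem stmt_2 (K L : Type*) [Field K] [IsAlgClosed K] [LieRing L] [LieAlgebra K L]
    [FiniteDimensional K L] [LieAlgebra.IsSimple K L]
    (A B : Submodule K L) (hcompl : IsCompl A B)
    (hAA : ∀ x ∈ A, ∀ y ∈ A, ⁅x, y⁆ ∈ B)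
    (hAB : ∀ x ∈ A, ∀ y ∈ B, ⁅x, y⁆ ∈ B)
    (hBB : ∀ x ∈ B, ∀ y ∈ B, ⁅x, y⁆ ∈ A) :
    ∀ x ∈ A, ∀ y ∈ A, ⁅x, y⁆ = 0 :=
  stmt_2_general K L A B hcompl hAA hAB hBB
end

section
/- Let L be a Lie algebra with G-grading L = ⊕_{i∈G} L_i (G an abelian semigroup), let ε satisfy the graded-contraction equations, and let L^ε denote the contracted Lie algebra with bracket [x,y]_new = ε_{i,j}[x,y] on homogeneous elements. Let r: L → End(V) be a representation compatible with the grading, i.e., V = ⊕_{j∈G} V_j with r(X_i)V_j ⊆ V_{i+j} for X_i ∈ L_i. If ψ: G × G → ℂ satisfies ψ_{j,k}ψ_{i,j+k} = ψ_{i,k}ψ_{j,i+k} = ε_{i,j}ψ_{i+j,k} for all i,j,k ∈ G, then r^ε defined by r^ε(X_i)v_j := ψ_{i,j} r(X_i)v_j (extended linearly) is a representation of L^ε on V. -/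
attribute [local instance 100] LieRing.ofAssociativeRing

/-!
Both `x y ↦ r^ε(⁅x, y⁆_ε)` and `x y ↦ ⁅r^ε x, r^ε y⁆` are bilinear maps into `End V`, so it
suffices to compare them on `X_i ∈ L_i`, `X_j ∈ L_j`, evaluated at `v_k ∈ V_k`. There the left
side is `ε_{i,j} ψ_{i+j,k} r(⁅X_i, X_j⁆) v_k`, the right side is
`ψ_{j,k} ψ_{i,j+k} r(X_i) r(X_j) v_k - ψ_{i,k} ψ_{j,i+k} r(X_j) r(X_i) v_k`, and the equations
on `ψ` say exactly that the three coefficients agree.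
-/

namespace LinearMap

variable {R M N P ι κ : Type*} [CommSemiring R] [AddCommMonoid M] [Module R M]
  [AddCommMonoid N] [Module R N] [AddCommMonoid P] [Module R P]

theorem ext_of_iSup_eq_top {p : ι → Submodule R M} (hp : ⨆ i, p i = ⊤) {f g : M →ₗ[R] N}
    (h : ∀ i, ∀ x ∈ p i, f x = g x) : f = g :=
  eqLocus_eq_top.1 <| eq_top_iff.2 <| hp ▸ iSup_le fun i x hx => h i x hx

theorem ext_of_iSup_eq_top₂ {p : ι → Submodule R M} {q : κ → Submodule R N}
    (hp : ⨆ i, p i = ⊤) (hq : ⨆ j, q j = ⊤) {f g : M →ₗ[R] N →ₗ[R] P}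
    (h : ∀ i j, ∀ x ∈ p i, ∀ y ∈ q j, f x y = g x y) : f = g :=
  ext_of_iSup_eq_top hp fun i x hx => ext_of_iSup_eq_top hq fun j y hy => h i j x hx y hy

end LinearMap

theorem stmt_4_general (G : Type*) [AddCommSemigroup G] [DecidableEq G]
    (L : Type*) [LieRing L] [LieAlgebra ℂ L]
    (V : Type*) [AddCommGroup V] [Module ℂ V]
    (Lg : G → Submodule ℂ L) (hLinternal : DirectSum.IsInternal Lg)
    (hgrading : ∀ i j : G, ∀ x ∈ Lg i, ∀ y ∈ Lg j, ⁅x, y⁆ ∈ Lg (i + j))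
    (ε : G → G → ℂ)
    (b : L →ₗ[ℂ] L →ₗ[ℂ] L)
    (hb : ∀ i j : G, ∀ x ∈ Lg i, ∀ y ∈ Lg j, b x y = ε i j • ⁅x, y⁆)
    (r : L →ₗ⁅ℂ⁆ Module.End ℂ V)
    (Vg : G → Submodule ℂ V) (hVinternal : DirectSum.IsInternal Vg)
    (hcompat : ∀ i j : G, ∀ x ∈ Lg i, ∀ v ∈ Vg j, r x v ∈ Vg (i + j))
    (ψ : G → G → ℂ)
    (hψ : ∀ i j k : G, ψ j k * ψ i (j + k) = ψ i k * ψ j (i + k) ∧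
      ψ i k * ψ j (i + k) = ε i j * ψ (i + j) k)
    (s : L →ₗ[ℂ] Module.End ℂ V)
    (hs : ∀ i j : G, ∀ x ∈ Lg i, ∀ v ∈ Vg j, s x v = ψ i j • r x v) :
    ∀ x y : L, s (b x y) = ⁅s x, s y⁆ := by
  have homogeneous : ∀ i j k, ∀ x ∈ Lg i, ∀ y ∈ Lg j, ∀ v ∈ Vg k,
      s (b x y) v = s x (s y v) - s y (s x v) := by
    intro i j k x hx y hy v hv
    rw [hb i j x hx y hy, map_smul, LinearMap.smul_apply,
      hs (i + j) k _ (hgrading i j x hx y hy) v hv, r.map_lie, hs j k y hy v hv,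
      hs i k x hx v hv, (s x).map_smul, (s y).map_smul,
      hs i (j + k) x hx _ (hcompat j k y hy v hv), hs j (i + k) y hy _ (hcompat i k x hx v hv)]
    simp only [Ring.lie_def, LinearMap.sub_apply, Module.End.mul_apply, smul_sub, smul_smul]
    rw [(hψ i j k).1, (hψ i j k).2]
  have bracket_eq : b.compr₂ s = (LieAlgebra.ad ℂ (Module.End ℂ V)).toLinearMap.compl₁₂ s s :=
    LinearMap.ext_of_iSup_eq_top₂ hLinternal.submodule_iSup_eq_top
      hLinternal.submodule_iSup_eq_top fun i j x hx y hy =>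
        LinearMap.ext_of_iSup_eq_top hVinternal.submodule_iSup_eq_top fun k v hv => by
          simpa [Ring.lie_def] using homogeneous i j k x hx y hy v hv
  intro x y
  simpa using LinearMap.congr_fun₂ bracket_eq x y

/-- If `r` is a representation of a `G`-graded Lie algebra `L` compatible with the grading,
`ε` solves the graded-contraction equations and `ψ` solves the associated equations
`ψ_{j,k}ψ_{i,j+k} = ψ_{i,k}ψ_{j,i+k} = ε_{i,j}ψ_{i+j,k}`, then the map `r^ε` defined on
homogeneous vectors by `r^ε(X_i)v_j = ψ_{i,j} r(X_i)v_j` is a representation of the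
contracted Lie algebra `L^ε` (whose bracket is `[x,y]_new = ε_{i,j}[x,y]`). -/
theorem stmt_4 (G : Type*) [AddCommSemigroup G] [DecidableEq G]
    (L : Type*) [LieRing L] [LieAlgebra ℂ L]
    (V : Type*) [AddCommGroup V] [Module ℂ V]
    (Lg : G → Submodule ℂ L) (hLinternal : DirectSum.IsInternal Lg)
    (hgrading : ∀ i j : G, ∀ x ∈ Lg i, ∀ y ∈ Lg j, ⁅x, y⁆ ∈ Lg (i + j))
    (ε : G → G → ℂ) (hsymm : ∀ i j, ε i j = ε j i)
    (hε : ∀ i j k : G, ε i j * ε (i + j) k = ε j k * ε (j + k) i ∧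
      ε j k * ε (j + k) i = ε k i * ε (k + i) j)
    (b : L →ₗ[ℂ] L →ₗ[ℂ] L)
    (hb : ∀ i j : G, ∀ x ∈ Lg i, ∀ y ∈ Lg j, b x y = ε i j • ⁅x, y⁆)
    (r : L →ₗ⁅ℂ⁆ Module.End ℂ V)
    (Vg : G → Submodule ℂ V) (hVinternal : DirectSum.IsInternal Vg)
    (hcompat : ∀ i j : G, ∀ x ∈ Lg i, ∀ v ∈ Vg j, r x v ∈ Vg (i + j))
    (ψ : G → G → ℂ)
    (hψ : ∀ i j k : G, ψ j k * ψ i (j + k) = ψ i k * ψ j (i + k) ∧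
      ψ i k * ψ j (i + k) = ε i j * ψ (i + j) k)
    (s : L →ₗ[ℂ] Module.End ℂ V)
    (hs : ∀ i j : G, ∀ x ∈ Lg i, ∀ v ∈ Vg j, s x v = ψ i j • r x v) :
    ∀ x y : L, s (b x y) = ⁅s x, s y⁆ :=
  stmt_4_general G L V Lg hLinternal hgrading ε b hb r Vg hVinternal hcompat ψ hψ s hs
end

section
/- Let L be a Lie algebra with G-grading and ε a solution of the graded-contraction equations. If r: L → End(V) is a representation compatible with the grading, then setting ψ_{i,j} := ε_{i,j} for all i,j yields a representation r^ε of the contracted algebra L^ε defined by r^ε(X_i)v_j = ε_{i,j} r(X_i)v_j. -/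
/-!
Both sides of `s (b x y) = ⁅s x, s y⁆` are linear in `x`, `y` and in the vector they act on, so
it suffices to compare them on homogeneous `x ∈ L_i`, `y ∈ L_j`, `v ∈ V_k`. There the left side
is `ε_{i,j} ψ_{i+j,k} r[x,y]v` and the right side is
`ψ_{j,k} ψ_{i,j+k} r(x)r(y)v - ψ_{i,k} ψ_{j,i+k} r(y)r(x)v`, so the identity follows once the
three coefficients agree; for `ψ = ε` this is the symmetry of `ε` together with the
graded-contraction equations.
-/

attribute [local instance 100] LieRing.ofAssociativeRing

theorem LinearMap.ext_of_iSup_eq_top_s5 {R M N ι : Type*} [Semiring R] [AddCommMonoid M]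
    [AddCommMonoid N] [Module R M] [Module R N] {p : ι → Submodule R M} (hp : ⨆ i, p i = ⊤)
    {f g : M →ₗ[R] N} (h : ∀ i, ∀ x ∈ p i, f x = g x) : f = g :=
  LinearMap.ext_on (s := ⋃ i, (p i : Set M)) (by rw [← Submodule.iSup_eq_span, hp]) fun x hx ↦ by
    obtain ⟨i, hi⟩ := Set.mem_iUnion.mp hx
    exact h i x hi

section GradedContraction

variable {R G : Type*} [CommRing R] [AddCommSemigroup G]

/-- `ψ_{j,k} ψ_{i,j+k} = ψ_{i,k} ψ_{j,i+k} = ε_{i,j} ψ_{i+j,k}`: the equations under which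
`r^ψ(X_i)v_j = ψ_{i,j} r(X_i)v_j` is a representation of the contracted algebra `L^ε`. -/
def IsContractedRepCoeff (ε ψ : G → G → R) : Prop :=
  ∀ i j k, ψ j k * ψ i (j + k) = ε i j * ψ (i + j) k ∧ ψ i k * ψ j (i + k) = ε i j * ψ (i + j) k

theorem isContractedRepCoeff_self {ε : G → G → R} (hsymm : ∀ i j, ε i j = ε j i)
    (hε : ∀ i j k : G, ε i j * ε (i + j) k = ε j k * ε (j + k) i ∧
      ε j k * ε (j + k) i = ε k i * ε (k + i) j) :
    IsContractedRepCoeff ε ε := fun i j k ↦ by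
  constructor
  · rw [(hε i j k).1, hsymm (j + k) i]
  · rw [(hε i j k).1, (hε i j k).2, hsymm k i, add_comm k i, hsymm (i + k) j]

variable {L V : Type*} [LieRing L] [LieAlgebra R L] [AddCommGroup V] [Module R V]
  {Lg : G → Submodule R L} {Vg : G → Submodule R V} {ε ψ : G → G → R}
  {b : L →ₗ[R] L →ₗ[R] L} {r : L →ₗ⁅R⁆ Module.End R V} {s : L →ₗ[R] Module.End R V}

theorem contracted_map_lie_apply_of_mem (hψ : IsContractedRepCoeff ε ψ)
    (hgrading : ∀ i j : G, ∀ x ∈ Lg i, ∀ y ∈ Lg j, ⁅x, y⁆ ∈ Lg (i + j))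
    (hb : ∀ i j : G, ∀ x ∈ Lg i, ∀ y ∈ Lg j, b x y = ε i j • ⁅x, y⁆)
    (hcompat : ∀ i j : G, ∀ x ∈ Lg i, ∀ v ∈ Vg j, r x v ∈ Vg (i + j))
    (hs : ∀ i j : G, ∀ x ∈ Lg i, ∀ v ∈ Vg j, s x v = ψ i j • r x v)
    {i j k : G} {x y : L} {v : V} (hx : x ∈ Lg i) (hy : y ∈ Lg j) (hv : v ∈ Vg k) :
    s (b x y) v = ⁅s x, s y⁆ v := by
  have hxy : s ⁅x, y⁆ v = ψ (i + j) k • r ⁅x, y⁆ v := hs _ _ _ (hgrading i j x hx y hy) v hv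
  have hxyv : s x (s y v) = (ψ j k * ψ i (j + k)) • r x (r y v) := by
    rw [hs j k y hy v hv, map_smul, hs i _ x hx _ (hcompat j k y hy v hv), smul_smul]
  have hyxv : s y (s x v) = (ψ i k * ψ j (i + k)) • r y (r x v) := by
    rw [hs i k x hx v hv, map_smul, hs j _ y hy _ (hcompat i k x hx v hv), smul_smul]
  rw [hb i j x hx y hy, map_smul, LinearMap.smul_apply, hxy, LieHom.map_lie, Ring.lie_def,
    Ring.lie_def]
  simp only [LinearMap.sub_apply, Module.End.mul_apply, hxyv, hyxv, (hψ i j k).1, (hψ i j k).2,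
    smul_sub, smul_smul]

theorem contracted_map_lie (hLg : ⨆ i, Lg i = ⊤) (hVg : ⨆ i, Vg i = ⊤)
    (hψ : IsContractedRepCoeff ε ψ)
    (hgrading : ∀ i j : G, ∀ x ∈ Lg i, ∀ y ∈ Lg j, ⁅x, y⁆ ∈ Lg (i + j))
    (hb : ∀ i j : G, ∀ x ∈ Lg i, ∀ y ∈ Lg j, b x y = ε i j • ⁅x, y⁆)
    (hcompat : ∀ i j : G, ∀ x ∈ Lg i, ∀ v ∈ Vg j, r x v ∈ Vg (i + j))
    (hs : ∀ i j : G, ∀ x ∈ Lg i, ∀ v ∈ Vg j, s x v = ψ i j • r x v) (x y : L) :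
    s (b x y) = ⁅s x, s y⁆ := by
  let bracket : Module.End R V →ₗ[R] Module.End R V →ₗ[R] Module.End R V :=
    LieAlgebra.ad R (Module.End R V)
  suffices b.compr₂ s = (bracket ∘ₗ s).compl₂ s from congr($this x y)
  refine LinearMap.ext_of_iSup_eq_top_s5 hLg fun i x hx ↦ ?_
  refine LinearMap.ext_of_iSup_eq_top_s5 hLg fun j y hy ↦ ?_
  refine LinearMap.ext_of_iSup_eq_top_s5 hVg fun k v hv ↦ ?_
  exact contracted_map_lie_apply_of_mem hψ hgrading hb hcompat hs hx hy hv

end GradedContraction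

/-- If `r` is a representation of a `G`-graded Lie algebra `L` compatible with the grading
and `ε` solves the graded-contraction equations, then the choice `ψ = ε` yields a
representation `r^ε` of the contracted algebra `L^ε`: the map defined on homogeneous
vectors by `r^ε(X_i)v_j = ε_{i,j} r(X_i)v_j` respects the contracted bracket
`[x,y]_new = ε_{i,j}[x,y]`. -/
theorem stmt_5 (G : Type*) [AddCommSemigroup G] [DecidableEq G]
    (L : Type*) [LieRing L] [LieAlgebra ℂ L]
    (V : Type*) [AddCommGroup V] [Module ℂ V]
    (Lg : G → Submodule ℂ L) (hLinternal : DirectSum.IsInternal Lg)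
    (hgrading : ∀ i j : G, ∀ x ∈ Lg i, ∀ y ∈ Lg j, ⁅x, y⁆ ∈ Lg (i + j))
    (ε : G → G → ℂ) (hsymm : ∀ i j, ε i j = ε j i)
    (hε : ∀ i j k : G, ε i j * ε (i + j) k = ε j k * ε (j + k) i ∧
      ε j k * ε (j + k) i = ε k i * ε (k + i) j)
    (b : L →ₗ[ℂ] L →ₗ[ℂ] L)
    (hb : ∀ i j : G, ∀ x ∈ Lg i, ∀ y ∈ Lg j, b x y = ε i j • ⁅x, y⁆)
    (r : L →ₗ⁅ℂ⁆ Module.End ℂ V)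
    (Vg : G → Submodule ℂ V) (hVinternal : DirectSum.IsInternal Vg)
    (hcompat : ∀ i j : G, ∀ x ∈ Lg i, ∀ v ∈ Vg j, r x v ∈ Vg (i + j))
    (s : L →ₗ[ℂ] Module.End ℂ V)
    (hs : ∀ i j : G, ∀ x ∈ Lg i, ∀ v ∈ Vg j, s x v = ε i j • r x v) :
    ∀ x y : L, s (b x y) = ⁅s x, s y⁆ :=
  contracted_map_lie hLinternal.submodule_iSup_eq_top hVinternal.submodule_iSup_eq_top
    (isContractedRepCoeff_self hsymm hε) hgrading hb hcompat hs
end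

section
/- For the ℤ₂-graded contraction equations over ℂ in degree set {0,1} — namely ε symmetric with (ε_{00} - ε_{01})ε_{01} = 0 and (ε_{00} - ε_{01})ε_{11} = 0 — with the additional equations for ψ: ψ_{00}² = ε_{00}ψ_{00}, ψ_{10}ψ_{01} = ψ_{00}ψ_{10} = ε_{00}ψ_{10} (and the full system ψ_{j,k}ψ_{i,j+k} = ψ_{i,k}ψ_{j,i+k} = ε_{i,j}ψ_{i+j,k} for i,j,k ∈ ℤ₂): when ε = [[1,1],[1,0]], every solution ψ of the system with values in {0,1} satisfies ψ_{10}·ψ_{11} = 0, ψ_{00}ψ_{00}=ψ_{00}, ψ_{01}ψ_{01}=ψ_{01}, ψ_{10}ψ_{01}=ψ_{00}ψ_{10}=ψ_{10}, ψ_{11}ψ_{00}=ψ_{01}ψ_{11}=ψ_{11}; and the complete list of solutions ψ: ℤ₂×ℤ₂ → ℂ is: [[1,1],[1,0]], [[1,1],[0,1]], [[1,1],[0,0]], [[1,0],[0,0]], [[0,1],[0,0]], [[0,0],[0,0]], together with the families obtained by scaling ψ_{10} and ψ_{11} by nonzero constants where applicable. -/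
lemma z2_add00 : (0 + 0 : ZMod 2) = 0 := rfl
lemma z2_add01 : (0 + 1 : ZMod 2) = 1 := rfl
lemma z2_add10 : (1 + 0 : ZMod 2) = 1 := rfl
lemma z2_add11 : (1 + 1 : ZMod 2) = 0 := rfl

/-- For the `ℤ₂`-graded contraction with `ε = [[1,1],[1,0]]`, the system
`ψ_{j,k}ψ_{i,j+k} = ψ_{i,k}ψ_{j,i+k} = ε_{i,j}ψ_{i+j,k}` reduces to the equations
`ψ₀₀² = ψ₀₀`, `ψ₁₀ψ₀₁ = ψ₀₀ψ₁₀ = ψ₁₀`, `ψ₀₁² = ψ₀₁`, `ψ₁₁ψ₀₀ = ψ₀₁ψ₁₁ = ψ₁₁`,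
`ψ₁₀ψ₁₁ = 0`, and its complete solution set over `ℂ` is: the six `{0,1}`-valued
matrices `[[1,1],[1,0]], [[1,1],[0,1]], [[1,1],[0,0]], [[1,0],[0,0]], [[0,1],[0,0]],
[[0,0],[0,0]]` together with the families obtained from the first two by scaling the
nonzero entry `ψ₁₀` resp. `ψ₁₁` by an arbitrary nonzero constant. -/
theorem stmt_19 (ε : ZMod 2 → ZMod 2 → ℂ)
    (hε00 : ε 0 0 = 1) (hε01 : ε 0 1 = 1) (hε10 : ε 1 0 = 1) (hε11 : ε 1 1 = 0)
    (ψ : ZMod 2 → ZMod 2 → ℂ) :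
    ((∀ i j k : ZMod 2,
        ψ j k * ψ i (j + k) = ψ i k * ψ j (i + k) ∧
        ψ i k * ψ j (i + k) = ε i j * ψ (i + j) k) →
      (ψ 0 0 * ψ 0 0 = ψ 0 0 ∧ ψ 0 1 * ψ 0 1 = ψ 0 1 ∧
       ψ 1 0 * ψ 0 1 = ψ 1 0 ∧ ψ 0 0 * ψ 1 0 = ψ 1 0 ∧
       ψ 1 1 * ψ 0 0 = ψ 1 1 ∧ ψ 0 1 * ψ 1 1 = ψ 1 1 ∧
       ψ 1 0 * ψ 1 1 = 0)) ∧
    ((∀ i j k : ZMod 2,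
        ψ j k * ψ i (j + k) = ψ i k * ψ j (i + k) ∧
        ψ i k * ψ j (i + k) = ε i j * ψ (i + j) k) ↔
      ((ψ 0 0 = 0 ∨ ψ 0 0 = 1) ∧ (ψ 0 1 = 0 ∨ ψ 0 1 = 1) ∧
       ψ 1 0 * ψ 1 1 = 0 ∧
       (ψ 1 0 ≠ 0 → ψ 0 0 = 1 ∧ ψ 0 1 = 1) ∧
       (ψ 1 1 ≠ 0 → ψ 0 0 = 1 ∧ ψ 0 1 = 1))) := by
  have key : (∀ i j k : ZMod 2,
        ψ j k * ψ i (j + k) = ψ i k * ψ j (i + k) ∧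
        ψ i k * ψ j (i + k) = ε i j * ψ (i + j) k) →
      (ψ 0 0 * ψ 0 0 = ψ 0 0 ∧ ψ 0 1 * ψ 0 1 = ψ 0 1 ∧
       ψ 1 0 * ψ 0 1 = ψ 1 0 ∧ ψ 0 0 * ψ 1 0 = ψ 1 0 ∧
       ψ 1 1 * ψ 0 0 = ψ 1 1 ∧ ψ 0 1 * ψ 1 1 = ψ 1 1 ∧
       ψ 1 0 * ψ 1 1 = 0) := by
    intro h
    have h000 := h 0 0 0
    have h001 := h 0 0 1
    have h010 := h 0 1 0
    have h011 := h 0 1 1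
    have h110 := h 1 1 0
    simp only [z2_add00, z2_add01, z2_add10, z2_add11, hε00, hε01, hε10, hε11,
      one_mul, zero_mul] at h000 h001 h010 h011 h110
    refine ⟨h000.2, h001.2, ?_, h010.2, ?_, h011.2, h110.2⟩
    · rw [h010.1]; exact h010.2
    · rw [h011.1]; exact h011.2
  refine ⟨key, ?_, ?_⟩
  · intro h
    obtain ⟨e1, e2, e3, e4, e5, e6, e7⟩ := key h
    refine ⟨?_, ?_, e7, ?_, ?_⟩
    · by_cases ha : ψ 0 0 = 0
      · exact Or.inl ha
      · exact Or.inr (mul_left_cancel₀ ha (by linear_combination e1 : ψ 0 0 * ψ 0 0 = ψ 0 0 * 1))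
    · by_cases hb : ψ 0 1 = 0
      · exact Or.inl hb
      · exact Or.inr (mul_left_cancel₀ hb (by linear_combination e2 : ψ 0 1 * ψ 0 1 = ψ 0 1 * 1))
    · intro hc
      exact ⟨mul_right_cancel₀ hc (by linear_combination e4 : ψ 0 0 * ψ 1 0 = 1 * ψ 1 0),
             mul_left_cancel₀ hc (by linear_combination e3 : ψ 1 0 * ψ 0 1 = ψ 1 0 * 1)⟩
    · intro hd
      exact ⟨mul_left_cancel₀ hd (by linear_combination e5 : ψ 1 1 * ψ 0 0 = ψ 1 1 * 1),
             mul_right_cancel₀ hd (by linear_combination e6 : ψ 0 1 * ψ 1 1 = 1 * ψ 1 1)⟩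
  · rintro ⟨ha, hb, hcd, hc, hd⟩ i j k
    have ea : ψ 0 0 * ψ 0 0 = ψ 0 0 := by rcases ha with h | h <;> rw [h] <;> ring
    have eb : ψ 0 1 * ψ 0 1 = ψ 0 1 := by rcases hb with h | h <;> rw [h] <;> ring
    have ec1 : ψ 0 0 * ψ 1 0 = ψ 1 0 := by
      by_cases hc0 : ψ 1 0 = 0
      · rw [hc0]; ring
      · rw [(hc hc0).1]; ring
    have ec2 : ψ 1 0 * ψ 0 1 = ψ 1 0 := by
      by_cases hc0 : ψ 1 0 = 0
      · rw [hc0]; ring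
      · rw [(hc hc0).2]; ring
    have ed1 : ψ 1 1 * ψ 0 0 = ψ 1 1 := by
      by_cases hd0 : ψ 1 1 = 0
      · rw [hd0]; ring
      · rw [(hd hd0).1]; ring
    have ed2 : ψ 0 1 * ψ 1 1 = ψ 1 1 := by
      by_cases hd0 : ψ 1 1 = 0
      · rw [hd0]; ring
      · rw [(hd hd0).2]; ring
    have hz : ∀ x : ZMod 2, x = 0 ∨ x = 1 := by decide
    rcases hz i with hi | hi <;> subst hi <;>
    rcases hz j with hj | hj <;> subst hj <;>
    rcases hz k with hk | hk <;> subst hk <;>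
      (refine ⟨?_, ?_⟩ <;>
         simp only [z2_add00, z2_add01, z2_add10, z2_add11, hε00, hε01, hε10, hε11,
           one_mul, zero_mul] <;>
         first
           | rfl
           | linear_combination ea
           | linear_combination eb
           | linear_combination ec1
           | linear_combination ec2
           | linear_combination ed1
           | linear_combination ed2
           | linear_combination ec1 - ec2
           | linear_combination ec2 - ec1
           | linear_combination ed1 - ed2
           | linear_combination ed2 - ed1
           | linear_combination hcd)
end
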